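/- Let f : [a,1] → R be continuously differentiable with |f'(x)| ≤ L for all x ∈ [a,1], where 0 < a < 1. Then for any n×n Hermitian matrices X, Y with spectra contained in [a,1], ∥f(X) − f(Y)∥ ≤ √n · L · ∥X − Y∥ in operator norm. -/

import Mathlib

open Matrix MeasureTheory
open scoped ComplexOrder

noncomputable section

variable {n : Type*} [Fintype n] [DecidableEq n]

/-- Matrix logarithm via spectral decomposition (junk value 0 for non-Hermitian input). -/
def matLog (M : Matrix n n ℂ) : Matrix n n ℂ :=
  if h : M.IsHermitian then
    (h.eigenvectorUnitary : Matrix n n ℂ) *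
      Matrix.diagonal (fun i => (Real.log (h.eigenvalues i) : ℂ)) *
      (star h.eigenvectorUnitary : Matrix n n ℂ)
  else 0

/-- Complex matrix power via spectral decomposition (junk value 0 for non-Hermitian input). -/
def matCPow (M : Matrix n n ℂ) (z : ℂ) : Matrix n n ℂ :=
  if h : M.IsHermitian then
    (h.eigenvectorUnitary : Matrix n n ℂ) *
      Matrix.diagonal (fun i => ((h.eigenvalues i : ℂ) ^ z)) *
      (star h.eigenvectorUnitary : Matrix n n ℂ)
  else 0

/-- von Neumann entropy `S(ρ) = -Tr[ρ log ρ]`. -/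
def vnEntropy (M : Matrix n n ℂ) : ℝ := -(Matrix.trace (M * matLog M)).re

/-- Quantum relative entropy `D(ρ‖σ) = Tr[ρ (log ρ - log σ)]`. -/
def relEntropy (ρ σ : Matrix n n ℂ) : ℝ := (Matrix.trace (ρ * (matLog ρ - matLog σ))).re

/-- Operator norm of a matrix. -/
def opNorm (M : Matrix n n ℂ) : ℝ := ‖Matrix.toEuclideanCLM (𝕜 := ℂ) M‖

/-- The old Mathlib `Matrix.PosSemidef.sqrt` (removed since), with its original definition. -/
def posSemidefSqrtOld {M : Matrix n n ℂ} (hM : M.PosSemidef) : Matrix n n ℂ :=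
  (hM.1.eigenvectorUnitary : Matrix n n ℂ) *
    Matrix.diagonal ((↑) ∘ Real.sqrt ∘ hM.1.eigenvalues) *
    (star hM.1.eigenvectorUnitary : Matrix n n ℂ)

/-- Trace norm `‖A‖₁ = Tr √(AᴴA)`. -/
def traceNorm (A : Matrix n n ℂ) : ℝ :=
  ((posSemidefSqrtOld (Matrix.posSemidef_conjTranspose_mul_self A)).trace).re

/-- Positive semidefinite square root (junk value 0 otherwise). -/
def sqrtPSD (M : Matrix n n ℂ) : Matrix n n ℂ :=
  open scoped Classical in
  if h : M.PosSemidef then posSemidefSqrtOld h else 0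

/-- Fidelity `F(ρ,σ) = ‖√ρ √σ‖₁`. -/
def fidelity (ρ σ : Matrix n n ℂ) : ℝ := traceNorm (sqrtPSD ρ * sqrtPSD σ)

/-- Binary entropy (natural logarithm). -/
def binEnt (p : ℝ) : ℝ := -(p * Real.log p) - (1 - p) * Real.log (1 - p)

section ptrace
variable {α β : Type*} [Fintype α] [Fintype β]

/-- Partial trace over the first tensor factor. -/
def ptraceFst (M : Matrix (α × β) (α × β) ℂ) : Matrix β β ℂ :=
  fun i j => ∑ a : α, M (a, i) (a, j)

/-- Partial trace over the second tensor factor. -/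
def ptraceSnd (M : Matrix (α × β) (α × β) ℂ) : Matrix α α ℂ :=
  fun i j => ∑ b : β, M (i, b) (j, b)

end ptrace


/-- Real matrix function via spectral decomposition (junk value 0 for non-Hermitian input). -/
def matFunR {n : Type*} [Fintype n] [DecidableEq n] (f : ℝ → ℝ) (M : Matrix n n ℂ) :
    Matrix n n ℂ :=
  if h : M.IsHermitian then
    (h.eigenvectorUnitary : Matrix n n ℂ) *
      Matrix.diagonal (fun i => ((f (h.eigenvalues i) : ℝ) : ℂ)) *
      (star h.eigenvectorUnitary : Matrix n n ℂ)
  else 0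

/-!
In eigenbases `X = U diag(λ) U*`, `Y = V diag(μ) V*`, the matrix `U* (f(X) - f(Y)) V` has entries
`(f(λᵢ) - f(μⱼ)) Wᵢⱼ` and `U* (X - Y) V` has entries `(λᵢ - μⱼ) Wᵢⱼ`, where `W = U* V`. Since `f` is
`L`-Lipschitz on `[a, 1]` by the mean value theorem, the first is entrywise bounded by `L` times the
second, so the unitarily invariant Hilbert–Schmidt norm `‖A‖₂ = (∑ |Aᵢⱼ|²)^(1/2)` satisfies
`‖f(X) - f(Y)‖₂ ≤ L ‖X - Y‖₂`. The factor `√n` comes from comparing it with the operator norm: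
`‖A‖ ≤ ‖A‖₂ ≤ √n ‖A‖`.
-/

namespace Matrix

variable {𝕜 : Type*} [RCLike 𝕜] {ι κ : Type*} [Fintype ι] [Fintype κ]

def hsNormSq (A : Matrix ι κ 𝕜) : ℝ := ∑ i, ∑ j, ‖A i j‖ ^ 2

lemma hsNormSq_le_of_norm_apply_le {A B : Matrix ι κ 𝕜} {L : ℝ}
    (h : ∀ i j, ‖A i j‖ ≤ L * ‖B i j‖) : hsNormSq A ≤ L ^ 2 * hsNormSq B := by
  simp only [hsNormSq, Finset.mul_sum, ← mul_pow]
  gcongr with i _ j _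
  exact h i j

lemma hsNormSq_eq_re_trace (A : Matrix ι κ 𝕜) : hsNormSq A = RCLike.re (Aᴴ * A).trace := by
  simp [hsNormSq, trace, mul_apply, RCLike.conj_mul, Finset.sum_comm (γ := ι)]

lemma hsNormSq_star_mul_mul [DecidableEq ι] [DecidableEq κ] {U : Matrix ι ι 𝕜}
    {V : Matrix κ κ 𝕜} (hU : U ∈ unitaryGroup ι 𝕜) (hV : V ∈ unitaryGroup κ 𝕜)
    (A : Matrix ι κ 𝕜) : hsNormSq (star U * A * V) = hsNormSq A := by
  have hUV : (star U * A * V)ᴴ * (star U * A * V) = star V * (Aᴴ * A) * V := by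
    simp only [conjTranspose_mul, ← star_eq_conjTranspose, star_star, Matrix.mul_assoc,
      ← Matrix.mul_assoc U, Unitary.mul_star_self_of_mem hU, Matrix.one_mul]
  rw [hsNormSq_eq_re_trace, hsNormSq_eq_re_trace, hUV, trace_mul_comm, ← Matrix.mul_assoc,
    Unitary.mul_star_self_of_mem hV, Matrix.one_mul]

section L2Operator

open scoped Matrix.Norms.L2Operator

variable [DecidableEq κ]

lemma l2_opNorm_sq_le_hsNormSq (A : Matrix ι κ 𝕜) : ‖A‖ ^ 2 ≤ hsNormSq A := by
  have hbound (x : EuclideanSpace 𝕜 κ) :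
      ‖(EuclideanSpace.equiv ι 𝕜).symm (A *ᵥ x)‖ ^ 2 ≤ hsNormSq A * ‖x‖ ^ 2 := by
    rw [EuclideanSpace.norm_sq_eq, EuclideanSpace.norm_sq_eq, hsNormSq, Finset.sum_mul]
    refine Finset.sum_le_sum fun i _ => ?_
    calc ‖(A *ᵥ x) i‖ ^ 2 ≤ (∑ j, ‖A i j‖ * ‖x j‖) ^ 2 := by
          gcongr
          exact (norm_sum_le _ _).trans_eq (by simp only [norm_mul])
      _ ≤ (∑ j, ‖A i j‖ ^ 2) * ∑ j, ‖x j‖ ^ 2 := Finset.sum_mul_sq_le_sq_mul_sq _ _ _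
  have hA : 0 ≤ hsNormSq A := by unfold hsNormSq; positivity
  rw [← Real.sq_sqrt hA]
  gcongr
  refine ContinuousLinearMap.opNorm_le_bound _ (Real.sqrt_nonneg _) fun x => ?_
  rw [← Real.sqrt_sq (norm_nonneg x), ← Real.sqrt_mul hA]
  exact Real.le_sqrt_of_sq_le (hbound x)

lemma hsNormSq_le_card_mul_l2_opNorm_sq (A : Matrix ι κ 𝕜) :
    hsNormSq A ≤ Fintype.card κ * ‖A‖ ^ 2 := by
  have hcol (j : κ) : ∑ i, ‖A i j‖ ^ 2 ≤ ‖A‖ ^ 2 :=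
    calc ∑ i, ‖A i j‖ ^ 2
        = ‖(EuclideanSpace.equiv ι 𝕜).symm (A *ᵥ EuclideanSpace.single j 1)‖ ^ 2 := by
          simp [EuclideanSpace.norm_sq_eq]
      _ ≤ ‖A‖ ^ 2 := by
          gcongr
          simpa using A.l2_opNorm_mulVec (EuclideanSpace.single j 1)
  rw [hsNormSq, Finset.sum_comm, ← nsmul_eq_mul, ← Finset.card_univ, ← Finset.sum_const]
  exact Finset.sum_le_sum fun j _ => hcol j

end L2Operator

lemma star_mul_diagonal_sub_diagonal_mul_apply [DecidableEq ι] {U V : Matrix ι ι 𝕜}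
    (hU : U ∈ unitaryGroup ι 𝕜) (hV : V ∈ unitaryGroup ι 𝕜) (d e : ι → 𝕜) (i j : ι) :
    (star U * (U * diagonal d * star U - V * diagonal e * star V) * V) i j
      = (d i - e j) * (star U * V) i j := by
  have hsplit : star U * (U * diagonal d * star U - V * diagonal e * star V) * V
      = diagonal d * (star U * V) - (star U * V) * diagonal e := by
    simp only [Matrix.mul_sub, Matrix.sub_mul, Matrix.mul_assoc,
      Unitary.star_mul_self_of_mem hV, Matrix.mul_one]
    simp only [← Matrix.mul_assoc, Unitary.star_mul_self_of_mem hU, Matrix.one_mul]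
  rw [hsplit, sub_apply, diagonal_mul, mul_diagonal]
  ring

end Matrix

lemma hsNormSq_matFunR_sub_le {ι : Type*} [Fintype ι] [DecidableEq ι] {f : ℝ → ℝ} {L : ℝ}
    {s : Set ℝ} (hf : ∀ x ∈ s, ∀ y ∈ s, |f x - f y| ≤ L * |x - y|)
    {X Y : Matrix ι ι ℂ} (hX : X.IsHermitian) (hY : Y.IsHermitian)
    (hXs : ∀ i, hX.eigenvalues i ∈ s) (hYs : ∀ i, hY.eigenvalues i ∈ s) :
    hsNormSq (matFunR f X - matFunR f Y) ≤ L ^ 2 * hsNormSq (X - Y) := by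
  set U : Matrix ι ι ℂ := ↑hX.eigenvectorUnitary
  set V : Matrix ι ι ℂ := ↑hY.eigenvectorUnitary
  have hU : U ∈ unitaryGroup ι ℂ := hX.eigenvectorUnitary.2
  have hV : V ∈ unitaryGroup ι ℂ := hY.eigenvectorUnitary.2
  have hfX : matFunR f X = U * diagonal (fun i => (f (hX.eigenvalues i) : ℂ)) * star U :=
    dif_pos hX
  have hfY : matFunR f Y = V * diagonal (fun i => (f (hY.eigenvalues i) : ℂ)) * star V :=
    dif_pos hY
  have hXU : X = U * diagonal (fun i => (hX.eigenvalues i : ℂ)) * star U := hX.spectral_theorem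
  have hYV : Y = V * diagonal (fun i => (hY.eigenvalues i : ℂ)) * star V := hY.spectral_theorem
  rw [← hsNormSq_star_mul_mul hU hV, ← hsNormSq_star_mul_mul hU hV (X - Y)]
  refine hsNormSq_le_of_norm_apply_le fun i j => ?_
  rw [hfX, hfY]
  conv_rhs => rw [hXU, hYV]
  simp only [star_mul_diagonal_sub_diagonal_mul_apply hU hV, norm_mul, ← Complex.ofReal_sub,
    Complex.norm_real, Real.norm_eq_abs, ← mul_assoc]
  gcongr
  exact hf _ (hXs i) _ (hYs j)

theorem stmt11_general (n : ℕ) (a L : ℝ) (ha1 : a < 1)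
    (f f' : ℝ → ℝ)
    (hderiv : ∀ x ∈ Set.Icc a 1, HasDerivAt f (f' x) x)
    (hL : ∀ x ∈ Set.Icc a 1, |f' x| ≤ L)
    (X Y : Matrix (Fin n) (Fin n) ℂ) (hX : X.IsHermitian) (hY : Y.IsHermitian)
    (hXs : ∀ i, hX.eigenvalues i ∈ Set.Icc a 1)
    (hYs : ∀ i, hY.eigenvalues i ∈ Set.Icc a 1) :
    opNorm (matFunR f X - matFunR f Y) ≤ Real.sqrt n * L * opNorm (X - Y) := by
  open scoped Matrix.Norms.L2Operator in
  have hL0 : 0 ≤ L := (abs_nonneg _).trans (hL a ⟨le_rfl, ha1.le⟩)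
  have hLip : ∀ x ∈ Set.Icc a 1, ∀ y ∈ Set.Icc a 1, |f x - f y| ≤ L * |x - y| :=
    fun x hx y hy => (convex_Icc a 1).norm_image_sub_le_of_norm_hasDerivWithin_le
      (fun z hz => (hderiv z hz).hasDerivWithinAt) hL hy hx
  change ‖matFunR f X - matFunR f Y‖ ≤ Real.sqrt n * L * ‖X - Y‖
  refine (pow_le_pow_iff_left₀ (norm_nonneg _) (by positivity) two_ne_zero).1 ?_
  calc ‖matFunR f X - matFunR f Y‖ ^ 2 ≤ hsNormSq (matFunR f X - matFunR f Y) :=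
        l2_opNorm_sq_le_hsNormSq _
    _ ≤ L ^ 2 * hsNormSq (X - Y) := hsNormSq_matFunR_sub_le hLip hX hY hXs hYs
    _ ≤ L ^ 2 * (n * ‖X - Y‖ ^ 2) := by
        gcongr
        simpa using hsNormSq_le_card_mul_l2_opNorm_sq (X - Y)
    _ = (Real.sqrt n * L * ‖X - Y‖) ^ 2 := by
        rw [mul_pow, mul_pow, Real.sq_sqrt (Nat.cast_nonneg n)]
        ring

/-- Lipschitz bound for matrix functions of Hermitian matrices with spectra
in `[a,1]`. -/
theorem stmt11 (n : ℕ) (a L : ℝ) (ha : 0 < a) (ha1 : a < 1)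
    (f f' : ℝ → ℝ)
    (hderiv : ∀ x ∈ Set.Icc a 1, HasDerivAt f (f' x) x)
    (hcont : ContinuousOn f' (Set.Icc a 1))
    (hL : ∀ x ∈ Set.Icc a 1, |f' x| ≤ L)
    (X Y : Matrix (Fin n) (Fin n) ℂ) (hX : X.IsHermitian) (hY : Y.IsHermitian)
    (hXs : ∀ i, hX.eigenvalues i ∈ Set.Icc a 1)
    (hYs : ∀ i, hY.eigenvalues i ∈ Set.Icc a 1) :
    opNorm (matFunR f X - matFunR f Y) ≤ Real.sqrt n * L * opNorm (X - Y) :=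
  stmt11_general n a L ha1 f f' hderiv hL X Y hX hY hXs hYs
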